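/- For fixed real numbers a ≤ x ≤ b, the soft-clipping function clip_s(x;a,b) = s·log(e^{x/s} + e^{a/s}) − s·log(e^{(x−b)/s} + 1) converges to x as s → 0⁺. -/

import Mathlib

open Real Filter Set

noncomputable def softClip (s x a b : ℝ) : ℝ :=
  s * Real.log (Real.exp (x / s) + Real.exp (a / s)) -
    s * Real.log (Real.exp ((x - b) / s) + 1)

open scoped Topology

/-! Factoring `exp (x / s)` out of the first logarithm writes `softClip s x a b` as
`x + s log (1 + exp ((a - x) / s)) - s log (1 + exp ((x - b) / s))`, and for `t ≤ 0`
the correction `s log (1 + exp (t / s))` lies in `[0, s]`, since `log (1 + y) ≤ y ≤ 1`. -/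

lemma softClip_eq {s : ℝ} (hs : s ≠ 0) (x a b : ℝ) :
    softClip s x a b =
      x + s * log (1 + exp ((a - x) / s)) - s * log (1 + exp ((x - b) / s)) := by
  have hfactor : exp (x / s) + exp (a / s) = exp (x / s) * (1 + exp ((a - x) / s)) := by
    rw [mul_add, mul_one, ← exp_add, sub_div, add_sub_cancel]
  rw [softClip, hfactor, log_mul (exp_pos _).ne' (by positivity), log_exp, mul_add,
    mul_div_cancel₀ _ hs, add_comm (exp _) 1]

lemma mul_log_one_add_exp_div_mem_Icc {s t : ℝ} (hs : 0 < s) (ht : t ≤ 0) :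
    s * log (1 + exp (t / s)) ∈ Icc 0 s := by
  have hexp : exp (t / s) ≤ 1 := exp_le_one_iff.mpr (div_nonpos_of_nonpos_of_nonneg ht hs.le)
  have hlog_nonneg : 0 ≤ log (1 + exp (t / s)) := log_nonneg (by linarith [exp_pos (t / s)])
  have hlog_le : log (1 + exp (t / s)) ≤ 1 := by
    linarith [log_le_sub_one_of_pos (by positivity : 0 < 1 + exp (t / s))]
  exact ⟨mul_nonneg hs.le hlog_nonneg, mul_le_of_le_one_right hs.le hlog_le⟩

lemma tendsto_mul_log_one_add_exp_div {t : ℝ} (ht : t ≤ 0) :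
    Tendsto (fun s => s * log (1 + exp (t / s))) (𝓝[>] 0) (𝓝 0) := by
  refine tendsto_of_tendsto_of_tendsto_of_le_of_le' tendsto_const_nhds
    (tendsto_nhdsWithin_of_tendsto_nhds tendsto_id) ?_ ?_ <;>
  filter_upwards [self_mem_nhdsWithin] with s hs
  exacts [(mul_log_one_add_exp_div_mem_Icc hs ht).1, (mul_log_one_add_exp_div_mem_Icc hs ht).2]

theorem softClip_tendsto_mid (a b x : ℝ) (hax : a ≤ x) (hxb : x ≤ b) :
    Tendsto (fun s : ℝ => softClip s x a b) (nhdsWithin 0 (Set.Ioi 0)) (nhds x) := by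
  have hlim := ((tendsto_mul_log_one_add_exp_div (sub_nonpos.mpr hax)).const_add x).sub
    (tendsto_mul_log_one_add_exp_div (sub_nonpos.mpr hxb))
  rw [add_zero, sub_zero] at hlim
  refine hlim.congr' ?_
  filter_upwards [self_mem_nhdsWithin] with s hs
  exact (softClip_eq (ne_of_gt hs) x a b).symm
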